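/- Fix u ∈ [0,1] and t ≥ 0. If for every j ≥ 1 the quantity N_n(j+1,t) − N_n(j,t) is non-decreasing in n (over n ≥ j+1), then n ↦ K(n,t) is non-decreasing, i.e., property [B] holds at this t. -/
import Mathlib


open Real MeasureTheory Filter Topology

/-- Auxiliary history-based recursion: `Nhist a u n m t` equals `N(m,t)` when `m ≤ n`. -/
noncomputable def Nhist (a : ℕ → ℝ) (u : ℝ) : ℕ → ℕ → ℝ → ℝ
  | 0, _, _ => 0
  | n + 1, m, t =>
      if m ≤ n then Nhist a u n m t
      else (Finset.Icc 1 (n + 1)).sup'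
          (Finset.nonempty_Icc.mpr (Nat.succ_le_succ (Nat.zero_le n)))
          (fun j => a j + (a j * (1 - u) + u) *
            (Real.exp (-t) * ∫ x in (0:ℝ)..t, Nhist a u n (n + 1 - j) x * Real.exp x))

/-- `Nval a u n t` is `N(n,t)`, the optimal expected number of enemy planes shot down,
with `N(0,t) = 0` and `N(n,t) = max_{1 ≤ j ≤ n} N_n(j,t)`. -/
noncomputable def Nval (a : ℕ → ℝ) (u : ℝ) (n : ℕ) (t : ℝ) : ℝ :=
  Nhist a u n n t

/-- `Nstar a u r t` is `N*(r,t) = e^{-t} ∫_0^t N(r,x) e^x dx` (so `N*(0,t) = 0`). -/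
noncomputable def Nstar (a : ℕ → ℝ) (u : ℝ) (r : ℕ) (t : ℝ) : ℝ :=
  Real.exp (-t) * ∫ x in (0:ℝ)..t, Nval a u r x * Real.exp x

/-- `Nalloc a u n j t` is `N_n(j,t) = a(j) + c(j)·N*(n-j,t)` where `c(j) = a(j)(1-u)+u`. -/
noncomputable def Nalloc (a : ℕ → ℝ) (u : ℝ) (n j : ℕ) (t : ℝ) : ℝ :=
  a j + (a j * (1 - u) + u) * Nstar a u (n - j) t

/-- `Kopt a u n t = min { j ∈ {1,…,n} : N_n(j,t) = N(n,t) }`. -/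
noncomputable def Kopt (a : ℕ → ℝ) (u : ℝ) (n : ℕ) (t : ℝ) : ℕ :=
  sInf {j : ℕ | 1 ≤ j ∧ j ≤ n ∧ Nalloc a u n j t = Nval a u n t}


lemma Nhist_eq (a : ℕ → ℝ) (u : ℝ) :
    ∀ n m : ℕ, m ≤ n → ∀ t : ℝ, Nhist a u n m t = Nhist a u m m t := by
  intro n
  induction n with
  | zero => intro m hm t; interval_cases m; rfl
  | succ n ih =>
      intro m hm t
      by_cases h : m ≤ n
      · rw [Nhist, if_pos h, ih m h t]
      · have : m = n + 1 := le_antisymm hm (Nat.succ_le_of_lt (Nat.lt_of_not_le h))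
        subst this; rfl

lemma Nval_eq_sup' (a : ℕ → ℝ) (u : ℝ) (n : ℕ) (t : ℝ) :
    Nval a u (n+1) t = (Finset.Icc 1 (n + 1)).sup'
      (Finset.nonempty_Icc.mpr (Nat.succ_le_succ (Nat.zero_le n)))
      (fun j => Nalloc a u (n+1) j t) := by
  have h0 : Nval a u (n+1) t = (Finset.Icc 1 (n + 1)).sup'
      (Finset.nonempty_Icc.mpr (Nat.succ_le_succ (Nat.zero_le n)))
      (fun j => a j + (a j * (1 - u) + u) *
        (Real.exp (-t) * ∫ x in (0:ℝ)..t, Nhist a u n (n + 1 - j) x * Real.exp x)) := by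
    show Nhist a u (n+1) (n+1) t = _
    conv_lhs => rw [Nhist]
    rw [if_neg (Nat.not_succ_le_self n)]
  rw [h0]
  apply Finset.sup'_congr _ rfl
  intro j hj
  simp only [Finset.mem_Icc] at hj
  have hle : n + 1 - j ≤ n := by omega
  have : (fun x => Nhist a u n (n + 1 - j) x * Real.exp x)
      = (fun x => Nval a u (n + 1 - j) x * Real.exp x) := by
    funext x
    rw [Nhist_eq a u n (n+1-j) hle x]; rfl
  simp only [Nalloc, Nstar, this]

lemma Kopt_mem (a : ℕ → ℝ) (u : ℝ) (n : ℕ) (hn : 1 ≤ n) (t : ℝ) :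
    1 ≤ Kopt a u n t ∧ Kopt a u n t ≤ n ∧
      Nalloc a u n (Kopt a u n t) t = Nval a u n t := by
  obtain ⟨n', rfl⟩ := Nat.exists_eq_add_of_le hn
  have hne := Finset.nonempty_Icc.mpr (Nat.succ_le_succ (Nat.zero_le n'))
  obtain ⟨j, hj, hje⟩ := Finset.exists_mem_eq_sup' hne (fun j => Nalloc a u (1+n') j t)
  simp only [Finset.mem_Icc] at hj
  have hjset : j ∈ {j : ℕ | 1 ≤ j ∧ j ≤ 1 + n' ∧ Nalloc a u (1+n') j t = Nval a u (1+n') t} := by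
    refine ⟨hj.1, by omega, ?_⟩
    rw [show (1:ℕ)+n' = n'+1 from by omega] at hje ⊢
    rw [Nval_eq_sup' a u n' t, hje]
  exact Nat.sInf_mem ⟨j, hjset⟩

lemma Nalloc_le_Nval (a : ℕ → ℝ) (u : ℝ) (n j : ℕ) (hj1 : 1 ≤ j) (hjn : j ≤ n) (t : ℝ) :
    Nalloc a u n j t ≤ Nval a u n t := by
  obtain ⟨n', rfl⟩ := Nat.exists_eq_add_of_le (le_trans hj1 hjn)
  rw [show (1:ℕ)+n' = n'+1 from by omega] at *
  rw [Nval_eq_sup' a u n' t]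
  exact Finset.le_sup' (fun j => Nalloc a u (n'+1) j t) (Finset.mem_Icc.mpr ⟨hj1, hjn⟩)

/-- Lemma 4.3: fix `u ∈ [0,1]` and `t ≥ 0`. If `N_n(j+1,t) - N_n(j,t)` is non-decreasing
in `n` (over `n ≥ j+1`) for every `j ≥ 1`, then `n ↦ K(n,t)` is non-decreasing. -/
theorem fighter_B_criterion
    (a : ℕ → ℝ) (haI : ∀ j, a j ∈ Set.Icc (0:ℝ) 1) (ha0 : a 0 = 0)
    (hmono : StrictMono a)
    (hconc : ∀ j : ℕ, a (j + 2) - a (j + 1) < a (j + 1) - a j)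
    (u : ℝ) (hu : u ∈ Set.Icc (0:ℝ) 1) (t : ℝ) (ht : 0 ≤ t)
    (hyp : ∀ j : ℕ, 1 ≤ j → ∀ m n : ℕ, j + 1 ≤ m → m ≤ n →
      Nalloc a u m (j + 1) t - Nalloc a u m j t ≤ Nalloc a u n (j + 1) t - Nalloc a u n j t) :
    ∀ m n : ℕ, 1 ≤ m → m ≤ n → Kopt a u m t ≤ Kopt a u n t := by
  intro m n hm hmn
  by_contra hlt
  push_neg at hlt
  set k := Kopt a u m t with hk
  set l := Kopt a u n t with hl
  obtain ⟨hk1, hkm, hkval⟩ := Kopt_mem a u m hm t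
  obtain ⟨hl1, hln, hlval⟩ := Kopt_mem a u n (le_trans hm hmn) t
  -- l < k
  have hlk : l < k := hlt
  -- telescoping comparison
  have key : ∀ r : ℕ, l ≤ r → r ≤ m →
      Nalloc a u m r t - Nalloc a u m l t ≤ Nalloc a u n r t - Nalloc a u n l t := by
    intro r
    induction r with
    | zero => intro h1 h2; omega
    | succ r ih =>
        intro h1 h2
        by_cases hr : l ≤ r
        · have step := hyp r (le_trans hl1 hr) m n (by omega) hmn
          have := ih hr (by omega)
          linarith
        · have : l = r + 1 := by omega
          rw [this]; simp
  have h1 := key k (le_of_lt hlk) hkm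
  have h2 : Nalloc a u n k t ≤ Nalloc a u n l t := by
    rw [hlval]
    exact Nalloc_le_Nval a u n k hk1 (le_trans hkm hmn) t
  have h3 : Nalloc a u m k t ≤ Nalloc a u m l t := by linarith
  have h4 : Nalloc a u m l t ≤ Nval a u m t :=
    Nalloc_le_Nval a u m l hl1 (by omega) t
  have h5 : Nalloc a u m l t = Nval a u m t := le_antisymm h4 (by rw [← hkval]; exact h3)
  have : k ≤ l := Nat.sInf_le ⟨hl1, by omega, h5⟩
  omega
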